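/- arXiv:1111.5552 — 2 statements merged into one kernel-verified Lean document; each statement's English description precedes it below -/
import Mathlib

section
/- Conjugation identity: with H = −Δ + ktV, H_ε = −Δ + ε (ε > 0), U multiplication by e^{ik|x|}, z = k², and T the operator Tu = −2i ∂u/∂r − i(d−1)u/|x| + tVu, one has, on suitable dense domains, U⁻¹(H + ε − z)U = H_ε + kT, and hence k U⁻¹(H + ε − z)⁻¹ U = H_ε^{−1/2}(B + 1/k)⁻¹ H_ε^{−1/2} where B = H_ε^{−1/2} T H_ε^{−1/2}. -/
open scoped BigOperators

/-- The (pointwise) Laplacian of a function on `ℝ^d`. -/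
noncomputable def lap {d : ℕ} (u : EuclideanSpace ℝ (Fin d) → ℂ)
    (x : EuclideanSpace ℝ (Fin d)) : ℂ :=
  ∑ i : Fin d, fderiv ℝ (fun y => fderiv ℝ u y (EuclideanSpace.single i 1)) x
    (EuclideanSpace.single i 1)

/-- Radial derivative `∂u/∂r = (x/|x|)·∇u`. -/
noncomputable def radialDeriv {d : ℕ} (u : EuclideanSpace ℝ (Fin d) → ℂ)
    (x : EuclideanSpace ℝ (Fin d)) : ℂ :=
  fderiv ℝ u x (‖x‖⁻¹ • x)

section AuxStmt11
open Complex
variable {d : ℕ}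

lemma sum_single_eq (x : EuclideanSpace ℝ (Fin d)) :
    ∑ i, x i • EuclideanSpace.single i (1:ℝ) = x := by
  ext j
  rw [show (∑ i, x i • EuclideanSpace.single i (1:ℝ)) j = ∑ i, (x i • EuclideanSpace.single i (1:ℝ)) j from by rw [WithLp.ofLp_sum, Finset.sum_apply]]
  simp [EuclideanSpace.single_apply]

lemma norm_hasFDerivAt {x : EuclideanSpace ℝ (Fin d)} (hx : x ≠ 0) :
    HasFDerivAt (fun y : EuclideanSpace ℝ (Fin d) => ‖y‖) (‖x‖⁻¹ • innerSL ℝ x) x := by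
  have hn : ‖x‖ ≠ 0 := norm_ne_zero_iff.mpr hx
  have h1 := (hasStrictFDerivAt_norm_sq x).hasFDerivAt
  have h2 := Real.hasDerivAt_sqrt (show ‖x‖^2 ≠ 0 by positivity)
  have h3 := h2.comp_hasFDerivAt x h1
  have hfn : (Real.sqrt ∘ fun y : EuclideanSpace ℝ (Fin d) => ‖y‖^2) = fun y => ‖y‖ :=
    funext fun y => Real.sqrt_sq (norm_nonneg y)
  rw [hfn] at h3
  refine h3.congr_fderiv ?_
  ext v
  simp [Real.sqrt_sq (norm_nonneg x), smul_smul]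
  field_simp

noncomputable def Mder (x : EuclideanSpace ℝ (Fin d)) : EuclideanSpace ℝ (Fin d) →L[ℝ] ℂ :=
  Complex.ofRealCLM.comp (‖x‖⁻¹ • innerSL ℝ x)

lemma cnorm_hasFDerivAt {x : EuclideanSpace ℝ (Fin d)} (hx : x ≠ 0) :
    HasFDerivAt (fun y : EuclideanSpace ℝ (Fin d) => (‖y‖ : ℂ)) (Mder x) x :=
  Complex.ofRealCLM.hasFDerivAt.comp x (norm_hasFDerivAt hx)

lemma Mder_apply (x v : EuclideanSpace ℝ (Fin d)) :
    Mder x v = (‖x‖ : ℂ)⁻¹ * ∑ i, (x i : ℂ) * (v i : ℂ) := by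
  simp [Mder, PiLp.inner_apply]
  left; exact Finset.sum_congr rfl fun _ _ => mul_comm _ _

lemma Mder_single (x : EuclideanSpace ℝ (Fin d)) (i : Fin d) :
    Mder x (EuclideanSpace.single i 1) = (‖x‖ : ℂ)⁻¹ * (x i : ℂ) := by
  rw [Mder_apply]
  congr 1
  simp [apply_ite (fun r : ℝ => (r : ℂ)), mul_ite, Finset.sum_ite_eq']

lemma phi_hasFDerivAt (k : ℂ) {x : EuclideanSpace ℝ (Fin d)} (hx : x ≠ 0) :
    HasFDerivAt (fun y : EuclideanSpace ℝ (Fin d) => Complex.exp (Complex.I * k * ‖y‖))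
      (Complex.exp (Complex.I * k * ‖x‖) • (Complex.I * k) • Mder x) x := by
  have h1 := (cnorm_hasFDerivAt hx).const_mul (Complex.I * k)
  exact (Complex.hasDerivAt_exp _).comp_hasFDerivAt x h1

lemma inv_cnorm_hasFDerivAt {x : EuclideanSpace ℝ (Fin d)} (hx : x ≠ 0) :
    HasFDerivAt (fun y : EuclideanSpace ℝ (Fin d) => ((‖y‖ : ℂ))⁻¹)
      ((-(((‖x‖ : ℂ))^2)⁻¹) • Mder x) x := by
  have h0 : (‖x‖ : ℂ) ≠ 0 := by
    exact_mod_cast norm_ne_zero_iff.mpr hx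
  exact (hasDerivAt_inv h0).comp_hasFDerivAt x (cnorm_hasFDerivAt hx)

lemma proj_hasFDerivAt (i : Fin d) (x : EuclideanSpace ℝ (Fin d)) :
    HasFDerivAt (fun y : EuclideanSpace ℝ (Fin d) => ((y i : ℝ) : ℂ))
      (Complex.ofRealCLM.comp (EuclideanSpace.proj (𝕜 := ℝ) i)) x :=
  Complex.ofRealCLM.hasFDerivAt.comp x (EuclideanSpace.proj (𝕜 := ℝ) i).hasFDerivAt

lemma radial_eq (u : EuclideanSpace ℝ (Fin d) → ℂ) (x : EuclideanSpace ℝ (Fin d)) (hx : x ≠ 0) :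
    (‖x‖ : ℂ) * radialDeriv u x
      = ∑ i, (x i : ℂ) * fderiv ℝ u x (EuclideanSpace.single i 1) := by
  have hn : ‖x‖ ≠ 0 := norm_ne_zero_iff.mpr hx
  have hnc : (‖x‖ : ℂ) ≠ 0 := by exact_mod_cast hn
  rw [radialDeriv]
  have h1 : fderiv ℝ u x (‖x‖⁻¹ • x)
      = ∑ i, ((‖x‖⁻¹ * x i : ℝ)) • fderiv ℝ u x (EuclideanSpace.single i 1) := by
    conv_lhs => rw [← sum_single_eq (‖x‖⁻¹ • x)]
    rw [map_sum]
    refine Finset.sum_congr rfl fun i _ => ?_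
    rw [map_smul]
    congr 1
  rw [h1, Finset.mul_sum]
  refine Finset.sum_congr rfl fun i _ => ?_
  rw [Complex.real_smul]
  push_cast
  field_simp

lemma sum_sq_eq (x : EuclideanSpace ℝ (Fin d)) :
    ∑ i, ((x i : ℂ))^2 = (‖x‖ : ℂ)^2 := by
  have h : ∑ i, (x i)^2 = ‖x‖^2 := by
    rw [EuclideanSpace.norm_sq_eq]
    simp [Real.norm_eq_abs, sq_abs]
  exact_mod_cast congrArg (fun r : ℝ => (r : ℂ)) h

lemma keyLem (k : ℂ) (u : EuclideanSpace ℝ (Fin d) → ℂ) (x : EuclideanSpace ℝ (Fin d))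
    (hx : x ≠ 0) (hu : ContDiffAt ℝ 2 u x) :
    lap (fun y => Complex.exp (Complex.I * k * ‖y‖) * u y) x
      = Complex.exp (Complex.I * k * ‖x‖) *
          (lap u x + 2 * Complex.I * k * radialDeriv u x
            + Complex.I * k * ((d : ℂ) - 1) * u x / (‖x‖ : ℂ) - k ^ 2 * u x) := by
  have hn : ‖x‖ ≠ 0 := norm_ne_zero_iff.mpr hx
  have hnc : ((‖x‖ : ℝ) : ℂ) ≠ 0 := by exact_mod_cast hn
  have hev : ∀ᶠ y in nhds x, ContDiffAt ℝ 2 u y ∧ y ≠ 0 :=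
    (hu.eventually (by simp)).and (eventually_ne_nhds hx)
  have claim1 : ∀ i : Fin d,
      (fun y => fderiv ℝ (fun t => Complex.exp (Complex.I * k * ‖t‖) * u t) y
          (EuclideanSpace.single i 1))
        =ᶠ[nhds x]
      (fun y => Complex.exp (Complex.I * k * ‖y‖) * fderiv ℝ u y (EuclideanSpace.single i 1)
        + u y * (Complex.exp (Complex.I * k * ‖y‖) * (Complex.I * k)
            * ((y i : ℂ) * ((‖y‖ : ℂ))⁻¹))) := by
    intro i
    filter_upwards [hev] with y hy
    obtain ⟨hy2, hy0⟩ := hy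
    have hφ := phi_hasFDerivAt (d := d) k hy0
    have hφd : DifferentiableAt ℝ
        (fun t : EuclideanSpace ℝ (Fin d) => Complex.exp (Complex.I * k * ‖t‖)) y :=
      hφ.differentiableAt
    have hud : DifferentiableAt ℝ u y := hy2.differentiableAt (by norm_num)
    rw [fderiv_fun_mul hφd hud]
    rw [ContinuousLinearMap.add_apply]
    rw [hφ.fderiv]
    simp only [ContinuousLinearMap.coe_smul', Pi.smul_apply, smul_eq_mul,
      ContinuousLinearMap.smul_apply, Mder_single]
    push_cast
    ring
  have hu1 : ContDiffAt ℝ 1 (fderiv ℝ u) x := hu.fderiv_right (by norm_num)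
  have key_i : ∀ i : Fin d,
      fderiv ℝ (fun y => fderiv ℝ (fun t => Complex.exp (Complex.I * k * ‖t‖) * u t) y
          (EuclideanSpace.single i 1)) x (EuclideanSpace.single i 1)
        = Complex.exp (Complex.I * k * ‖x‖) *
              fderiv ℝ (fun y => fderiv ℝ u y (EuclideanSpace.single i 1)) x
              (EuclideanSpace.single i 1)
          + 2 * (Complex.I * k) * Complex.exp (Complex.I * k * ‖x‖) * ((‖x‖ : ℂ))⁻¹
              * ((x i : ℂ) * fderiv ℝ u x (EuclideanSpace.single i 1))
          + u x * Complex.exp (Complex.I * k * ‖x‖) *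
              ((Complex.I * k) * ((‖x‖ : ℂ))⁻¹
                - (Complex.I * k) * (x i : ℂ)^2 * ((‖x‖ : ℂ))⁻¹^3
                + (Complex.I * k)^2 * (x i : ℂ)^2 * ((‖x‖ : ℂ))⁻¹^2) := by
    intro i
    rw [(claim1 i).fderiv_eq]
    have hDui : DifferentiableAt ℝ
        (fun y => fderiv ℝ u y (EuclideanSpace.single i 1)) x :=
      ((hu1.clm_apply contDiffAt_const).differentiableAt (by norm_num))
    have hDu := hDui.hasFDerivAt
    have hφx := phi_hasFDerivAt (d := d) k hx
    have hp := proj_hasFDerivAt i x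
    have hr := inv_cnorm_hasFDerivAt hx
    have hux := (hu.differentiableAt (by norm_num)).hasFDerivAt
    have hG := (hφx.fun_mul hDu).fun_add (hux.fun_mul ((hφx.mul_const (Complex.I * k)).fun_mul (hp.fun_mul hr)))
    rw [hG.fderiv]
    simp only [ContinuousLinearMap.add_apply, ContinuousLinearMap.coe_smul', Pi.smul_apply,
      smul_eq_mul, ContinuousLinearMap.smul_apply, Mder_single, ContinuousLinearMap.coe_comp',
      Function.comp_apply, Complex.ofRealCLM_apply, PiLp.proj_apply,
      EuclideanSpace.single_apply, if_pos rfl]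
    push_cast
    simp only [← inv_pow]
    ring
  rw [lap]
  rw [Finset.sum_congr rfl fun i _ => key_i i]
  rw [Finset.sum_add_distrib, Finset.sum_add_distrib, ← Finset.mul_sum, ← Finset.mul_sum,
    ← Finset.mul_sum]
  have hS : ∑ i : Fin d, fderiv ℝ (fun y => fderiv ℝ u y (EuclideanSpace.single i 1)) x
      (EuclideanSpace.single i 1) = lap u x := rfl
  have e1 : ∀ (a : ℂ), ∑ i : Fin d, a * (x i : ℂ)^2 = a * ((‖x‖ : ℂ))^2 := by
    intro a
    rw [← Finset.mul_sum, sum_sq_eq]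
  have hsum3 : ∑ i : Fin d,
      ((Complex.I * k) * ((‖x‖ : ℂ))⁻¹
        - (Complex.I * k) * (x i : ℂ)^2 * ((‖x‖ : ℂ))⁻¹^3
        + (Complex.I * k)^2 * (x i : ℂ)^2 * ((‖x‖ : ℂ))⁻¹^2)
      = (d : ℂ) * ((Complex.I * k) * ((‖x‖ : ℂ))⁻¹)
        - (Complex.I * k) * ((‖x‖ : ℂ))⁻¹^3 * ((‖x‖ : ℂ))^2
        - k^2 * ((‖x‖ : ℂ))⁻¹^2 * ((‖x‖ : ℂ))^2 := by
    rw [Finset.sum_add_distrib, Finset.sum_sub_distrib, Finset.sum_const, Finset.card_univ]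
    rw [show (∑ i : Fin d, (Complex.I * k) * (x i : ℂ)^2 * ((‖x‖ : ℂ))⁻¹^3)
        = ∑ i : Fin d, ((Complex.I * k) * ((‖x‖ : ℂ))⁻¹^3) * (x i : ℂ)^2 from
      Finset.sum_congr rfl fun i _ => by ring]
    rw [show (∑ i : Fin d, (Complex.I * k)^2 * (x i : ℂ)^2 * ((‖x‖ : ℂ))⁻¹^2)
        = ∑ i : Fin d, ((Complex.I * k)^2 * ((‖x‖ : ℂ))⁻¹^2) * (x i : ℂ)^2 from
      Finset.sum_congr rfl fun i _ => by ring]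
    rw [e1, e1, nsmul_eq_mul, Fintype.card_fin]
    simp only [mul_pow, Complex.I_sq]
    push_cast
    ring
  rw [hS, hsum3, ← radial_eq u x hx]
  field_simp [hnc]
  ring

end AuxStmt11

/-- Conjugation identity: with `H = −Δ + ktV`, `H_ε = −Δ + ε`, `U` multiplication by
`e^{ik|x|}`, `z = k²`, and `T u = −2i ∂u/∂r − i(d−1)u/|x| + tVu`, one has (pointwise on
smooth functions vanishing near the origin) `U⁻¹(H + ε − z)U = H_ε + kT`; and hence, in
resolvent form: if `(H + ε − z)u = k·Uv` then `w = U⁻¹u` satisfies `(H_ε + kT)w = k v`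
(this is `k U⁻¹(H + ε − z)⁻¹U v = (H_ε + kT)⁻¹ (k v) = H_ε^{−1/2}(B + 1/k)⁻¹H_ε^{−1/2} v`
with `B = H_ε^{−1/2} T H_ε^{−1/2}`). -/


theorem stmt11 (d : ℕ) (k z : ℂ) (hk : 0 < k.im) (hz : z = k ^ 2) (ε t : ℝ) (hε : 0 < ε)
    (V : EuclideanSpace ℝ (Fin d) → ℝ) (hVb : ∃ M : ℝ, ∀ x, |V x| ≤ M)
    (hVsupp : HasCompactSupport V) :
    (∀ u : EuclideanSpace ℝ (Fin d) → ℂ, ContDiff ℝ (⊤ : ℕ∞) u →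
      (∃ δ : ℝ, 0 < δ ∧ ∀ x, ‖x‖ < δ → u x = 0) →
      ∀ x : EuclideanSpace ℝ (Fin d), x ≠ 0 →
        Complex.exp (-Complex.I * k * ‖x‖) *
          ((-lap (fun y => Complex.exp (Complex.I * k * ‖y‖) * u y) x
              + k * (t : ℂ) * (V x : ℂ) * (Complex.exp (Complex.I * k * ‖x‖) * u x))
            + (ε : ℂ) * (Complex.exp (Complex.I * k * ‖x‖) * u x)
            - z * (Complex.exp (Complex.I * k * ‖x‖) * u x))
        = (-lap u x + (ε : ℂ) * u x)
            + k * (-2 * Complex.I * radialDeriv u x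
                - Complex.I * ((d : ℂ) - 1) * u x / (‖x‖ : ℂ) + (t : ℂ) * (V x : ℂ) * u x)) ∧
    (∀ u v : EuclideanSpace ℝ (Fin d) → ℂ, ContDiff ℝ (⊤ : ℕ∞) u →
      (∃ δ : ℝ, 0 < δ ∧ ∀ x, ‖x‖ < δ → u x = 0) →
      (∀ x : EuclideanSpace ℝ (Fin d), x ≠ 0 →
        -lap u x + k * (t : ℂ) * (V x : ℂ) * u x + (ε : ℂ) * u x - z * u x
          = k * Complex.exp (Complex.I * k * ‖x‖) * v x) →
      ∀ x : EuclideanSpace ℝ (Fin d), x ≠ 0 →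
        (-lap (fun y => Complex.exp (-Complex.I * k * ‖y‖) * u y) x
            + (ε : ℂ) * (Complex.exp (-Complex.I * k * ‖x‖) * u x))
          + k * (-2 * Complex.I * radialDeriv (fun y => Complex.exp (-Complex.I * k * ‖y‖) * u y) x
              - Complex.I * ((d : ℂ) - 1) * (Complex.exp (-Complex.I * k * ‖x‖) * u x) / (‖x‖ : ℂ)
              + (t : ℂ) * (V x : ℂ) * (Complex.exp (-Complex.I * k * ‖x‖) * u x))
          = k * v x) := by
  subst hz
  constructor
  · intro u hu _ x hx
    have hu2 : ContDiffAt ℝ 2 u x := hu.contDiffAt.of_le (WithTop.coe_le_coe.mpr le_top)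
    have h := keyLem k u x hx hu2
    rw [h]
    have hcan : Complex.exp (-Complex.I * k * ‖x‖) * Complex.exp (Complex.I * k * ‖x‖) = 1 := by
      rw [← Complex.exp_add, show -Complex.I * k * (‖x‖ : ℂ) + Complex.I * k * ‖x‖ = 0 by ring,
        Complex.exp_zero]
    linear_combination (-(lap u x + 2 * Complex.I * k * radialDeriv u x
        + Complex.I * k * ((d : ℂ) - 1) * u x / (‖x‖ : ℂ) - k ^ 2 * u x)
      + k * (t : ℂ) * (V x : ℂ) * u x + (ε : ℂ) * u x - k ^ 2 * u x) * hcan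
  · intro u v hu _ hEq x hx
    have hwx : ContDiffAt ℝ 2 (fun y : EuclideanSpace ℝ (Fin d) =>
        Complex.exp (-Complex.I * k * ‖y‖) * u y) x := by
      have h1 : ContDiffAt ℝ 2 (fun y : EuclideanSpace ℝ (Fin d) => ((‖y‖ : ℝ) : ℂ)) x :=
        Complex.ofRealCLM.contDiff.contDiffAt.comp x (contDiffAt_norm ℝ hx)
      have h2 : ContDiffAt ℝ 2 (fun y : EuclideanSpace ℝ (Fin d) =>
          -Complex.I * k * (‖y‖ : ℂ)) x := contDiffAt_const.mul h1
      exact (Complex.contDiff_exp.contDiffAt.comp x h2).mul (hu.contDiffAt.of_le (WithTop.coe_le_coe.mpr le_top))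
    have h := keyLem k (fun y => Complex.exp (-Complex.I * k * ‖y‖) * u y) x hx hwx
    have hfun : (fun y : EuclideanSpace ℝ (Fin d) =>
        Complex.exp (Complex.I * k * ‖y‖) * (Complex.exp (-Complex.I * k * ‖y‖) * u y)) = u := by
      funext y
      rw [← mul_assoc, ← Complex.exp_add,
        show Complex.I * k * (‖y‖ : ℂ) + -Complex.I * k * ‖y‖ = 0 by ring, Complex.exp_zero,
        one_mul]
    rw [hfun] at h
    have hE := hEq x hx
    have hcan : Complex.exp (-Complex.I * k * ‖x‖) * Complex.exp (Complex.I * k * ‖x‖) = 1 := by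
      rw [← Complex.exp_add, show -Complex.I * k * (‖x‖ : ℂ) + Complex.I * k * ‖x‖ = 0 by ring,
        Complex.exp_zero]
    refine mul_left_cancel₀ (Complex.exp_ne_zero (Complex.I * k * ‖x‖)) ?_
    linear_combination h + hE
      + ((ε : ℂ) * u x + k * (t : ℂ) * (V x : ℂ) * u x - k ^ 2 * u x) * hcan
end

section
/- Explicit solution of T w = v: with T = −2i ∂/∂r − i(d−1)/|x| + tV (t ≠ 0), v(x) = V(x)|x|^{−(d−1)/2}, and V vanishing inside the unit ball, the function w(x) = t⁻¹ |x|^{−(d−1)/2}(1 − e^{−itW(x)/2}) satisfies T w = v; moreover w is compactly supported whenever V is. -/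
/-!
Write `w = t⁻¹ ρ (1 - E)` with `ρ = ‖x‖ ^ (-(d-1)/2)` and `E = exp (-i t W / 2)`. The exponent of
`ρ` is chosen so that `∂ᵣρ = -(d-1) ρ / (2‖x‖)`, whence `-2i t⁻¹ (∂ᵣρ) (1 - E)` cancels the
term `-i (d-1) w / ‖x‖`; and `∂ᵣE = -(i t / 2) V E`, so the rest of `T w` is
`V ρ E + V ρ (1 - E) = V ρ`. Compact support is inherited because `w` vanishes wherever `W` does.
-/

section RadialDeriv

variable {d : ℕ} {u v : EuclideanSpace ℝ (Fin d) → ℂ} {x : EuclideanSpace ℝ (Fin d)}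

theorem radialDeriv_mul (hu : DifferentiableAt ℝ u x) (hv : DifferentiableAt ℝ v x) :
    radialDeriv (fun y => u y * v y) x = radialDeriv u x * v x + u x * radialDeriv v x := by
  simp only [radialDeriv, fderiv_fun_mul hu hv, add_apply, smul_apply, smul_eq_mul]
  ring

theorem radialDeriv_const_mul (hu : DifferentiableAt ℝ u x) (c : ℂ) :
    radialDeriv (fun y => c * u y) x = c * radialDeriv u x := by
  simp only [radialDeriv, fderiv_const_mul hu, smul_apply, smul_eq_mul]

theorem radialDeriv_const_sub (c : ℂ) :
    radialDeriv (fun y => c - u y) x = -radialDeriv u x := by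
  simp only [radialDeriv, fderiv_const_sub, neg_apply]

theorem radialDeriv_cexp (hu : DifferentiableAt ℝ u x) :
    radialDeriv (fun y => Complex.exp (u y)) x = Complex.exp (u x) * radialDeriv u x := by
  simp only [radialDeriv, hu.hasFDerivAt.cexp.fderiv, smul_apply, smul_eq_mul]

theorem radialDeriv_ofReal {f : EuclideanSpace ℝ (Fin d) → ℝ} (hf : DifferentiableAt ℝ f x) :
    radialDeriv (fun y => (f y : ℂ)) x = (fderiv ℝ f x (‖x‖⁻¹ • x) : ℂ) := by
  have hfC : HasFDerivAt (fun y => (f y : ℂ)) (Complex.ofRealCLM.comp (fderiv ℝ f x)) x :=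
    Complex.ofRealCLM.hasFDerivAt.comp x hf.hasFDerivAt
  rw [radialDeriv, hfC.fderiv]
  rfl

end RadialDeriv

section NormRpow

variable {E : Type*} [NormedAddCommGroup E] [InnerProductSpace ℝ E] {x : E}

theorem fderiv_norm_apply_inv_norm_smul_self (hx : x ≠ 0) :
    fderiv ℝ (fun y : E => ‖y‖) x (‖x‖⁻¹ • x) = 1 := by
  have hdiff := (contDiffAt_norm ℝ hx).differentiableAt one_ne_zero
  rw [map_smul, hdiff.fderiv_norm_self, smul_eq_mul, inv_mul_cancel₀ (norm_ne_zero_iff.mpr hx)]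

theorem hasFDerivAt_norm_rpow_const (hx : x ≠ 0) (α : ℝ) :
    HasFDerivAt (fun y : E => ‖y‖ ^ α)
      ((α * ‖x‖ ^ (α - 1)) • fderiv ℝ (fun y : E => ‖y‖) x) x :=
  (Real.hasDerivAt_rpow_const (Or.inl (norm_ne_zero_iff.mpr hx))).comp_hasFDerivAt x
    ((contDiffAt_norm ℝ hx).differentiableAt one_ne_zero).hasFDerivAt

theorem fderiv_norm_rpow_apply_inv_norm_smul_self (hx : x ≠ 0) (α : ℝ) :
    fderiv ℝ (fun y : E => ‖y‖ ^ α) x (‖x‖⁻¹ • x) = α * ‖x‖ ^ α / ‖x‖ := by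
  rw [(hasFDerivAt_norm_rpow_const hx α).fderiv, smul_apply,
    fderiv_norm_apply_inv_norm_smul_self hx, smul_eq_mul, mul_one,
    Real.rpow_sub_one (norm_ne_zero_iff.mpr hx), mul_div_assoc]

end NormRpow

theorem stmt13_general (d : ℕ) (t : ℝ) (ht : t ≠ 0)
    (V W : EuclideanSpace ℝ (Fin d) → ℝ)
    (hWdiff : Differentiable ℝ W)
    (hWV : ∀ x : EuclideanSpace ℝ (Fin d), x ≠ 0 → fderiv ℝ W x (‖x‖⁻¹ • x) = V x)
    (w : EuclideanSpace ℝ (Fin d) → ℂ)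
    (hw : ∀ x : EuclideanSpace ℝ (Fin d),
      w x = (t : ℂ)⁻¹ * ((‖x‖ ^ (-(((d : ℝ) - 1) / 2)) : ℝ) : ℂ) *
        (1 - Complex.exp (-Complex.I * t * W x / 2))) :
    (∀ x : EuclideanSpace ℝ (Fin d), x ≠ 0 →
      -2 * Complex.I * radialDeriv w x - Complex.I * ((d : ℂ) - 1) * w x / (‖x‖ : ℂ)
          + (t : ℂ) * (V x : ℂ) * w x
        = (V x : ℂ) * ((‖x‖ ^ (-(((d : ℝ) - 1) / 2)) : ℝ) : ℂ)) ∧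
    (HasCompactSupport W → HasCompactSupport w) := by
  refine ⟨fun x hx => ?_, fun hWc => hWc.mono fun y hy hWy => hy ?_⟩
  · set α : ℝ := -(((d : ℝ) - 1) / 2) with hα
    set E : ℂ := Complex.exp (-Complex.I * t * W x / 2)
    have hρ : DifferentiableAt ℝ (fun y : EuclideanSpace ℝ (Fin d) => ‖y‖ ^ α) x :=
      (hasFDerivAt_norm_rpow_const hx α).differentiableAt
    have hphase :
        (fun y => -Complex.I * t * W y / 2) = fun y => (-Complex.I * t / 2) * (W y : ℂ) := by
      funext y; ring
    have hrad : radialDeriv w x = (t : ℂ)⁻¹ *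
        ((α * ‖x‖ ^ α / ‖x‖ : ℝ) * (1 - E) -
          (‖x‖ ^ α : ℝ) * (E * (-Complex.I * t / 2 * V x))) := by
      rw [funext hw, radialDeriv_mul, radialDeriv_const_mul, radialDeriv_const_sub,
        radialDeriv_cexp, hphase, radialDeriv_const_mul, radialDeriv_ofReal, radialDeriv_ofReal,
        fderiv_norm_rpow_apply_inv_norm_smul_self hx, hWV x hx]
      all_goals first | fun_prop | ring
    have hr : (‖x‖ : ℂ) ≠ 0 := by exact_mod_cast norm_ne_zero_iff.mpr hx
    have htC : (t : ℂ) ≠ 0 := by exact_mod_cast ht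
    have hwx : w x = (t : ℂ)⁻¹ * ((‖x‖ ^ α : ℝ) : ℂ) * (1 - E) := hw x
    rw [hrad, hwx, hα]
    push_cast
    field_simp
    linear_combination (-((‖x‖ ^ α : ℝ) : ℂ) * E * t * ‖x‖ * V x) * Complex.I_sq
  · rw [hw y, hWy]
    simp

/-- Explicit solution of `T w = v`: with `T = −2i ∂/∂r − i(d−1)/|x| + tV` (`t ≠ 0`),
`v = V |x|^{−(d−1)/2}`, `V` vanishing inside the unit ball with radial antiderivative `W`,
the function `w = t⁻¹|x|^{−(d−1)/2}(1 − e^{−itW/2})` satisfies `T w = v`; moreover `w` is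
compactly supported whenever `W` is (which is the relevant case `V = ∂/∂r (ζ_n W̃)`). -/
theorem stmt13 (d : ℕ) (hd : 1 ≤ d) (t : ℝ) (ht : t ≠ 0)
    (V W : EuclideanSpace ℝ (Fin d) → ℝ)
    (hV0 : ∀ x : EuclideanSpace ℝ (Fin d), ‖x‖ < 1 → V x = 0)
    (hW0 : ∀ x : EuclideanSpace ℝ (Fin d), ‖x‖ < 1 → W x = 0)
    (hWdiff : Differentiable ℝ W)
    (hWV : ∀ x : EuclideanSpace ℝ (Fin d), x ≠ 0 → fderiv ℝ W x (‖x‖⁻¹ • x) = V x)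
    (w : EuclideanSpace ℝ (Fin d) → ℂ)
    (hw : ∀ x : EuclideanSpace ℝ (Fin d),
      w x = (t : ℂ)⁻¹ * ((‖x‖ ^ (-(((d : ℝ) - 1) / 2)) : ℝ) : ℂ) *
        (1 - Complex.exp (-Complex.I * t * W x / 2))) :
    (∀ x : EuclideanSpace ℝ (Fin d), x ≠ 0 →
      -2 * Complex.I * radialDeriv w x - Complex.I * ((d : ℂ) - 1) * w x / (‖x‖ : ℂ)
          + (t : ℂ) * (V x : ℂ) * w x
        = (V x : ℂ) * ((‖x‖ ^ (-(((d : ℝ) - 1) / 2)) : ℝ) : ℂ)) ∧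
    (HasCompactSupport W → HasCompactSupport w) :=
  stmt13_general d t ht V W hWdiff hWV w hw
end
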